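/- arXiv:1301.4243 — 6 statements merged into one kernel-verified Lean document; each statement's English description precedes it below -/
import Mathlib

section
/- There exists a constant K ≥ 1, depending only on i, j, C₀ and c₀, with the following property. Let Δ ⊆ I be a closed interval such that |F_L(x)| ≤ c / max{|A|^{1/i}, |B|^{1/j}} for all x ∈ Δ, and set V := min_{x∈Δ} |F'_L(x)| = min_{x∈Δ} |A − B f'(x)|. Then: (1) if V > 0, the length of Δ satisfies |Δ| ≤ K·c / (max{|A|^{1/i}, |B|^{1/j}}·V); and (2) if B ≠ 0, then |Δ| ≤ K·( c / (max{|A|^{1/i}, |B|^{1/j}}·|B|) )^{1/2}. -/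
/-!
Write `g = F_L`, so `|g| ≤ ε := c / max{|A|^(1/i), |B|^(1/j)}` on `Δ = [a, b]`. By the mean value
theorem some `ξ ∈ Δ` has `|g' ξ| · |Δ| = |g b - g a| ≤ 2ε`, which gives the first bound. For the
second, the same argument on the outer thirds of `Δ` yields points `ξ₁ < ξ₂`, at distance at least
`|Δ|/3`, where `|g'| ≤ 6ε/|Δ|`; a second application of the mean value theorem, now to
`g' = A - B f'`, whose derivative has absolute value `|B f''| ≥ c₀|B|`, gives
`c₀ |B| |Δ|² ≤ 36 ε`.
-/

open Set Filter Topology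

theorem exists_abs_deriv_mul_sub_le {g g' : ℝ → ℝ} {a b : ℝ} (hab : a < b)
    (hgc : ContinuousOn g (Icc a b)) (hg : ∀ x ∈ Ioo a b, HasDerivAt g (g' x) x) :
    ∃ ξ ∈ Ioo a b, |g' ξ| * (b - a) ≤ |g a| + |g b| := by
  obtain ⟨ξ, hξ, hslope⟩ := exists_hasDerivAt_eq_slope g g' hab hgc hg
  refine ⟨ξ, hξ, ?_⟩
  rw [hslope, abs_div, abs_of_pos (sub_pos.2 hab), div_mul_cancel₀ _ (sub_pos.2 hab).ne',
    add_comm]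
  exact abs_sub _ _

theorem mul_sub_le_of_abs_le {g g' : ℝ → ℝ} {a b ε V : ℝ} (hab : a ≤ b)
    (hgc : ContinuousOn g (Icc a b)) (hg : ∀ x ∈ Ioo a b, HasDerivAt g (g' x) x)
    (hε : ∀ x ∈ Icc a b, |g x| ≤ ε) (hV : ∀ x ∈ Ioo a b, V ≤ |g' x|) :
    V * (b - a) ≤ 2 * ε := by
  have ha := hε a (left_mem_Icc.2 hab)
  have hb := hε b (right_mem_Icc.2 hab)
  rcases hab.eq_or_lt with rfl | hlt
  · rw [sub_self, mul_zero]
    linarith [abs_nonneg (g a)]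
  obtain ⟨ξ, hξ, hξ_le⟩ := exists_abs_deriv_mul_sub_le hlt hgc hg
  calc V * (b - a) ≤ |g' ξ| * (b - a) := mul_le_mul_of_nonneg_right (hV ξ hξ) (sub_nonneg.2 hab)
    _ ≤ 2 * ε := by linarith

theorem mul_sub_sq_le_of_abs_le {g g' g'' : ℝ → ℝ} {a b ε m : ℝ} (hab : a ≤ b)
    (hgc : ContinuousOn g (Icc a b)) (hg : ∀ x ∈ Ioo a b, HasDerivAt g (g' x) x)
    (hg' : ∀ x ∈ Ioo a b, HasDerivAt g' (g'' x) x)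
    (hε : ∀ x ∈ Icc a b, |g x| ≤ ε) (hm : ∀ x ∈ Ioo a b, m ≤ |g'' x|) :
    m * (b - a) ^ 2 ≤ 36 * ε := by
  have hε₀ : 0 ≤ ε := (abs_nonneg _).trans (hε a (left_mem_Icc.2 hab))
  rcases hab.eq_or_lt with rfl | hlt
  · simpa using hε₀
  set ℓ := b - a
  have hℓ₀ : 0 < ℓ := sub_pos.2 hlt
  have hε' : ∀ x, a ≤ x → x ≤ b → |g x| ≤ ε := fun x h₁ h₂ => hε x ⟨h₁, h₂⟩
  obtain ⟨ξ₁, hξ₁, hg'ξ₁⟩ := exists_abs_deriv_mul_sub_le (a := a) (b := a + ℓ / 3) (by linarith)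
    (hgc.mono (Icc_subset_Icc le_rfl (by linarith)))
    (fun x hx => hg x ⟨hx.1, by linarith [hx.2]⟩)
  obtain ⟨ξ₂, hξ₂, hg'ξ₂⟩ := exists_abs_deriv_mul_sub_le (a := b - ℓ / 3) (b := b) (by linarith)
    (hgc.mono (Icc_subset_Icc (by linarith) le_rfl))
    (fun x hx => hg x ⟨by linarith [hx.1], hx.2⟩)
  have hgap : ℓ / 3 ≤ ξ₂ - ξ₁ := by linarith [hξ₁.2, hξ₂.1]
  have hsub : Icc ξ₁ ξ₂ ⊆ Ioo a b := Icc_subset_Ioo hξ₁.1 hξ₂.2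
  obtain ⟨η, hη, hg''η⟩ := exists_abs_deriv_mul_sub_le (g := g') (by linarith)
    (fun x hx => (hg' x (hsub hx)).continuousAt.continuousWithinAt)
    (fun x hx => hg' x (hsub (Ioo_subset_Icc_self hx)))
  have hsmall₁ : |g' ξ₁| * (ℓ / 3) ≤ 2 * ε := by
    have := hε' a le_rfl hlt.le
    have := hε' (a + ℓ / 3) (by linarith) (by linarith)
    rw [add_sub_cancel_left] at hg'ξ₁
    linarith
  have hsmall₂ : |g' ξ₂| * (ℓ / 3) ≤ 2 * ε := by
    have := hε' b hlt.le le_rfl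
    have := hε' (b - ℓ / 3) (by linarith) (by linarith)
    rw [sub_sub_cancel] at hg'ξ₂
    linarith
  rcases le_or_gt m 0 with hm₀ | hm₀
  · exact (mul_nonpos_of_nonpos_of_nonneg hm₀ (sq_nonneg ℓ)).trans (by linarith)
  calc m * ℓ ^ 2 = 9 * (m * (ℓ / 3) * (ℓ / 3)) := by ring
    _ ≤ 9 * (|g'' η| * (ξ₂ - ξ₁) * (ℓ / 3)) := by
        gcongr
        exact hm η (hsub (Ioo_subset_Icc_self hη))
    _ ≤ 9 * ((|g' ξ₁| + |g' ξ₂|) * (ℓ / 3)) := by gcongr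
    _ ≤ 36 * ε := by linarith

theorem le_div_sqrt_mul_sqrt_of_mul_sq_le {p ℓ s t : ℝ} (hp : 0 < p) (hs : 0 ≤ s)
    (h : p * ℓ ^ 2 ≤ s ^ 2 * t) : ℓ ≤ s / √p * √t := by
  have hsq : ℓ ^ 2 ≤ (s / √p) ^ 2 * t := by
    rw [div_pow, Real.sq_sqrt hp.le, div_mul_eq_mul_div, le_div_iff₀ hp]
    linarith
  calc ℓ ≤ |ℓ| := le_abs_self ℓ
    _ ≤ √((s / √p) ^ 2 * t) := Real.abs_le_sqrt hsq
    _ = s / √p * √t := by rw [Real.sqrt_mul (sq_nonneg _), Real.sqrt_sq (by positivity)]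

theorem interval_length_bound_general
    (i j c₀ C₀ : ℝ) (hc₀ : 0 < c₀) :
    ∃ K : ℝ, 1 ≤ K ∧
      ∀ (I : Set ℝ), I.OrdConnected →
      ∀ (f f' f'' : ℝ → ℝ),
        (∀ x ∈ I, HasDerivWithinAt f (f' x) I x) →
        (∀ x ∈ I, HasDerivWithinAt f' (f'' x) I x) →
        ContinuousOn f'' I →
        (∀ x ∈ I, c₀ ≤ |f' x| ∧ |f' x| ≤ C₀ ∧ c₀ ≤ |f'' x| ∧ |f'' x| ≤ C₀) →
      ∀ (c : ℝ), 0 < c →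
      ∀ (A B C : ℤ), ¬(A = 0 ∧ B = 0) →
      ∀ (a b : ℝ), a ≤ b → Set.Icc a b ⊆ I →
        (∀ x ∈ Set.Icc a b,
          |(A : ℝ) * x - (B : ℝ) * f x + (C : ℝ)| ≤
            c / max (|(A : ℝ)| ^ ((1 : ℝ) / i)) (|(B : ℝ)| ^ ((1 : ℝ) / j))) →
      ∀ V : ℝ,
        IsLeast ((fun x => |(A : ℝ) - (B : ℝ) * f' x|) '' Set.Icc a b) V →
        ((0 < V → b - a ≤ K * c /
            (max (|(A : ℝ)| ^ ((1 : ℝ) / i)) (|(B : ℝ)| ^ ((1 : ℝ) / j)) * V)) ∧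
         (B ≠ 0 → b - a ≤ K * Real.sqrt
            (c / (max (|(A : ℝ)| ^ ((1 : ℝ) / i)) (|(B : ℝ)| ^ ((1 : ℝ) / j)) *
              |(B : ℝ)|)))) := by
  refine ⟨max 2 (6 / √c₀), le_max_of_le_left one_le_two, ?_⟩
  intro I _ f f' f'' hf hf' _ hbounds c _ A B C _ a b hab hsub hsmall V hV
  set M := max (|(A : ℝ)| ^ ((1 : ℝ) / i)) (|(B : ℝ)| ^ ((1 : ℝ) / j))
  have hM : 0 ≤ M := le_max_of_le_left (by positivity)
  have hI : ∀ x ∈ Ioo a b, I ∈ 𝓝 x := fun x hx =>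
    mem_of_superset (Ioo_mem_nhds hx.1 hx.2) (Ioo_subset_Icc_self.trans hsub)
  have hFc : ContinuousOn (fun x => (A : ℝ) * x - B * f x + C) (Icc a b) :=
    ((continuousOn_const.mul continuousOn_id).sub (continuousOn_const.mul
      fun x hx => ((hf x (hsub hx)).continuousWithinAt.mono hsub))).add continuousOn_const
  have hF : ∀ x ∈ Ioo a b, HasDerivAt (fun x => (A : ℝ) * x - B * f x + C) (A - B * f' x) x :=
    fun x hx => by
      simpa using (((hasDerivAt_id x).const_mul (A : ℝ)).sub
        (((hf x (hsub (Ioo_subset_Icc_self hx))).hasDerivAt (hI x hx)).const_mul (B : ℝ))).add_const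
        (C : ℝ)
  have hF' : ∀ x ∈ Ioo a b, HasDerivAt (fun x => (A : ℝ) - B * f' x) (-(B * f'' x)) x :=
    fun x hx =>
      (((hf' x (hsub (Ioo_subset_Icc_self hx))).hasDerivAt (hI x hx)).const_mul (B : ℝ)).const_sub
        (A : ℝ)
  constructor
  · intro hV₀
    have hlen := mul_sub_le_of_abs_le hab hFc hF hsmall
      fun x hx => hV.2 (mem_image_of_mem _ (Ioo_subset_Icc_self hx))
    calc b - a ≤ 2 * (c / M) / V := by rw [le_div_iff₀ hV₀]; linarith
      _ = 2 * c / (M * V) := by ring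
      _ ≤ max 2 (6 / √c₀) * c / (M * V) := by gcongr; exact le_max_left _ _
  · intro hB
    have hB₀ : (0 : ℝ) < |(B : ℝ)| := by positivity
    have hlen := mul_sub_sq_le_of_abs_le (m := |(B : ℝ)| * c₀) hab hFc hF hF' hsmall
      fun x hx => by
        rw [abs_neg, abs_mul]
        exact mul_le_mul_of_nonneg_left (hbounds x (hsub (Ioo_subset_Icc_self hx))).2.2.1
          (abs_nonneg _)
    have hsq : c₀ * (b - a) ^ 2 ≤ 6 ^ 2 * (c / (M * |(B : ℝ)|)) := by
      rw [← div_div, mul_div_assoc', le_div_iff₀ hB₀]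
      linarith
    calc b - a ≤ 6 / √c₀ * √(c / (M * |(B : ℝ)|)) :=
          le_div_sqrt_mul_sqrt_of_mul_sq_le hc₀ (by norm_num) hsq
      _ ≤ max 2 (6 / √c₀) * √(c / (M * |(B : ℝ)|)) := by gcongr; exact le_max_right _ _

/-- There is a constant `K ≥ 1`, depending only on `i, j, C₀, c₀`, bounding the length
of any interval `Δ ⊆ I` on which `|F_L| ≤ c / max{|A|^(1/i), |B|^(1/j)}`:
by `K·c/(max{|A|^(1/i),|B|^(1/j)}·V)` when `V := min_Δ |F_L'| > 0`, and by
`K·(c/(max{|A|^(1/i),|B|^(1/j)}·|B|))^(1/2)` when `B ≠ 0`. -/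
theorem interval_length_bound
    (i j c₀ C₀ : ℝ) (hi : 0 < i) (hij : i ≤ j) (hj : j < 1) (hsum : i + j = 1)
    (hc₀ : 0 < c₀) (hC₀ : c₀ ≤ C₀) :
    ∃ K : ℝ, 1 ≤ K ∧
      ∀ (I : Set ℝ), I.OrdConnected →
      ∀ (f f' f'' : ℝ → ℝ),
        (∀ x ∈ I, HasDerivWithinAt f (f' x) I x) →
        (∀ x ∈ I, HasDerivWithinAt f' (f'' x) I x) →
        ContinuousOn f'' I →
        (∀ x ∈ I, c₀ ≤ |f' x| ∧ |f' x| ≤ C₀ ∧ c₀ ≤ |f'' x| ∧ |f'' x| ≤ C₀) →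
      ∀ (c : ℝ), 0 < c →
      ∀ (A B C : ℤ), ¬(A = 0 ∧ B = 0) →
      ∀ (a b : ℝ), a ≤ b → Set.Icc a b ⊆ I →
        (∀ x ∈ Set.Icc a b,
          |(A : ℝ) * x - (B : ℝ) * f x + (C : ℝ)| ≤
            c / max (|(A : ℝ)| ^ ((1 : ℝ) / i)) (|(B : ℝ)| ^ ((1 : ℝ) / j))) →
      ∀ V : ℝ,
        IsLeast ((fun x => |(A : ℝ) - (B : ℝ) * f' x|) '' Set.Icc a b) V →
        ((0 < V → b - a ≤ K * c /
            (max (|(A : ℝ)| ^ ((1 : ℝ) / i)) (|(B : ℝ)| ^ ((1 : ℝ) / j)) * V)) ∧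
         (B ≠ 0 → b - a ≤ K * Real.sqrt
            (c / (max (|(A : ℝ)| ^ ((1 : ℝ) / i)) (|(B : ℝ)| ^ ((1 : ℝ) / j)) *
              |(B : ℝ)|)))) :=
  interval_length_bound_general i j c₀ C₀ hc₀
end

section
/- Let n, k, l, m be integers with n ≥ 1, 0 ≤ k, l ≥ 0, m ≥ 0, and let c₁' > 0 satisfy c₁' ≥ 2K c^{1/2} 2^{−k} R and 8 C₀ c₁' R^{−n} ≤ 2^{−m} R^{−λ l}. Let Δ be a closed interval centered at a point x₁ with length |Δ| = 2K c^{1/2} / H, where H := c^{−1/2} V max{|A|^{1/i}, |B|^{1/j}} and V := min_{x∈Δ} |F'_L(x)|, attained at x₀ ∈ Δ; suppose |F_L(x₁)| ≤ c / max{|A|^{1/i}, |B|^{1/j}}, that 2^k R^{n−1} ≤ H < 2^{k+1} R^{n−1}, and that 2^{−m−1} R^{−λ l} (C₀+1) max{|A|,|B|} < V ≤ 2^{−m} R^{−λ l} (C₀+1) max{|A|,|B|}. Let J ⊆ I be an interval of length |J| = c₁' R^{−n} with Δ ∩ J ≠ ∅. Then for every x ∈ J one has (1/2)·V ≤ |F'_L(x)|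 ≤ (3/2)·V and |F_L(x)| ≤ 5·|J|·V. -/
/-- `max{|A|^(1/i), |B|^(1/j)}`. -/
noncomputable def Mnum (i j : ℝ) (A B : ℤ) : ℝ :=
  max (|(A : ℝ)| ^ ((1 : ℝ) / i)) (|(B : ℝ)| ^ ((1 : ℝ) / j))

/-- `F_L(x) = Ax − B f(x) + C`. -/
noncomputable def FL (A B C : ℤ) (f : ℝ → ℝ) (x : ℝ) : ℝ :=
  (A : ℝ) * x - (B : ℝ) * f x + (C : ℝ)

/-! `F_L' = A - B f'` has derivative bounded by `L = C₀ max(|A|, |B|)`, and the hypotheses on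
`c₁'` and `V` give `L |J| ≤ V / 4`, while those on `c₁'` and `H` give `|Δ| ≤ |J|`. So on `J`,
`|F_L'|` stays within `V / 4` of its value at a common point of `Δ` and `J`, which lies in
`[V, 5V/4]`. For `F_L` itself, `|F_L(x₁)| ≤ c / max{…} = |Δ| V / (2K) ≤ |J| V / 2`, and
`|F_L'| ≤ 3V/2` on `Δ ∪ J` over a distance at most `3|J|/2` from `x₁` adds at most `9|J|V/4`. -/

open Set

lemma Mnum_nonneg (i j : ℝ) (A B : ℤ) : 0 ≤ Mnum i j A B :=
  le_max_of_le_left (Real.rpow_nonneg (abs_nonneg _) _)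

lemma hasDerivWithinAt_FL {A B C : ℤ} {f : ℝ → ℝ} {f'x x : ℝ} {s : Set ℝ}
    (hf : HasDerivWithinAt f f'x s x) :
    HasDerivWithinAt (FL A B C f) ((A : ℝ) - (B : ℝ) * f'x) s x := by
  have h := (((hasDerivWithinAt_id x s).const_mul (A : ℝ)).sub (hf.const_mul (B : ℝ))).add_const
    (C : ℝ)
  rwa [mul_one] at h

lemma abs_sub_le_of_hasDerivWithinAt {I s : Set ℝ} (hs : s.OrdConnected) (hsI : s ⊆ I)
    {g g' : ℝ → ℝ} {L : ℝ} (hg : ∀ x ∈ I, HasDerivWithinAt g (g' x) I x)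
    (hg' : ∀ x ∈ s, |g' x| ≤ L) {x y : ℝ} (hx : x ∈ s) (hy : y ∈ s) :
    |g y - g x| ≤ L * |y - x| := by
  simpa only [Real.norm_eq_abs] using
    (convex_iff_ordConnected.mpr hs).norm_image_sub_le_of_norm_hasDerivWithin_le
      (fun t ht => (hg t (hsI ht)).mono hsI) hg' hx hy

lemma abs_sub_le_of_mem_Icc {a b x y : ℝ} (hx : x ∈ Icc a b) (hy : y ∈ Icc a b) :
    |y - x| ≤ b - a := by
  simpa only [Real.dist_eq] using Real.dist_le_of_mem_Icc hy hx

lemma ordConnected_Icc_union_Icc {a b u v : ℝ} (h : (Icc a b ∩ Icc u v).Nonempty) :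
    (Icc a b ∪ Icc u v).OrdConnected := by
  obtain ⟨y, hyΔ, hyJ⟩ := h
  rw [Icc_union_Icc' (hyJ.1.trans hyΔ.2) (hyΔ.1.trans hyJ.2)]
  exact ordConnected_Icc

lemma div_le_mul_rpow_of_rpow_mul_rpow_le {X H R p q : ℝ} (hX : 0 ≤ X) (hR : 0 < R)
    (hH : 2 ^ p * R ^ (q - 1) ≤ H) : X / H ≤ X * 2 ^ (-p) * R * R ^ (-q) := by
  have hpos : 0 < (2 : ℝ) ^ p * R ^ (q - 1) := by positivity
  have hrw : X * 2 ^ (-p) * R * R ^ (-q) = X / (2 ^ p * R ^ (q - 1)) := by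
    rw [Real.rpow_neg zero_le_two, Real.rpow_neg hR.le, Real.rpow_sub_one hR.ne']
    field_simp
  rw [hrw]
  exact div_le_div_of_nonneg_left hX hpos hH

section MeetingIntervals

variable {I : Set ℝ} {F g g' : ℝ → ℝ} {L V a b u v : ℝ}

lemma IsLeast.nonneg_of_abs_image {s : Set ℝ} (hV : IsLeast ((fun x => |g x|) '' s) V) :
    0 ≤ V := by
  obtain ⟨x₀, -, rfl⟩ := hV.1
  exact abs_nonneg _

lemma abs_le_of_isLeast_abs_image
    (hV : IsLeast ((fun x => |g x|) '' Icc a b) V)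
    (hlip : ∀ x ∈ Icc a b, ∀ y ∈ Icc a b, |g y - g x| ≤ L * |y - x|) (hL : 0 ≤ L)
    {t : ℝ} (ht : t ∈ Icc a b) : |g t| ≤ V + L * (b - a) := by
  obtain ⟨x₀, hx₀, rfl⟩ := hV.1
  calc |g t| ≤ |g x₀| + |g t - g x₀| := by linarith [abs_sub_abs_le_abs_sub (g t) (g x₀)]
    _ ≤ |g x₀| + L * (b - a) := by
      grw [hlip x₀ hx₀ t ht, abs_sub_le_of_mem_Icc hx₀ ht]

theorem abs_bounds_of_meets_Icc_of_isLeast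
    (hF : ∀ x ∈ I, HasDerivWithinAt F (g x) I x)
    (hg : ∀ x ∈ I, HasDerivWithinAt g (g' x) I x) (hg' : ∀ x ∈ I, |g' x| ≤ L)
    (hΔI : Icc a b ⊆ I) (hJI : Icc u v ⊆ I) (hmeet : (Icc a b ∩ Icc u v).Nonempty)
    (hV : IsLeast ((fun x => |g x|) '' Icc a b) V)
    (hLJ : L * (v - u) ≤ V / 4) (hΔJ : b - a ≤ v - u)
    (hmid : |F ((a + b) / 2)| ≤ (v - u) * V / 2) :
    ∀ x ∈ Icc u v, V / 2 ≤ |g x| ∧ |g x| ≤ 3 / 2 * V ∧ |F x| ≤ 5 * (v - u) * V := by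
  set s := Icc a b ∪ Icc u v
  have hs : s.OrdConnected := ordConnected_Icc_union_Icc hmeet
  have hsI : s ⊆ I := union_subset hΔI hJI
  obtain ⟨y, hyΔ, hyJ⟩ := hmeet
  have hL : 0 ≤ L := (abs_nonneg _).trans (hg' y (hΔI hyΔ))
  have hVnonneg : 0 ≤ V := hV.nonneg_of_abs_image
  have hlip : ∀ x ∈ s, ∀ y ∈ s, |g y - g x| ≤ L * |y - x| := fun x hx y hy =>
    abs_sub_le_of_hasDerivWithinAt hs hsI hg (fun t ht => hg' t (hsI ht)) hx hy
  have hgΔ : ∀ t ∈ Icc a b, |g t| ≤ 5 / 4 * V := fun t ht => by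
    have := abs_le_of_isLeast_abs_image hV
      (fun x hx y hy => hlip x (Or.inl hx) y (Or.inl hy)) hL ht
    linarith [mul_le_mul_of_nonneg_left hΔJ hL]
  have hgJ : ∀ x ∈ Icc u v, V / 2 ≤ |g x| ∧ |g x| ≤ 3 / 2 * V := fun x hx => by
    have hxy : |g x - g y| ≤ V / 4 := (hlip y (Or.inr hyJ) x (Or.inr hx)).trans <|
      (mul_le_mul_of_nonneg_left (abs_sub_le_of_mem_Icc hyJ hx) hL).trans hLJ
    have hy₁ : V ≤ |g y| := hV.2 ⟨y, hyΔ, rfl⟩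
    have hy₂ := hgΔ y hyΔ
    constructor
    · linarith [abs_sub_abs_le_abs_sub (g y) (g x), abs_sub_comm (g y) (g x)]
    · linarith [abs_sub_abs_le_abs_sub (g x) (g y)]
  have hFlip : ∀ x ∈ s, ∀ y ∈ s, |F y - F x| ≤ 3 / 2 * V * |y - x| := by
    refine fun x hx y hy => abs_sub_le_of_hasDerivWithinAt hs hsI hF (fun t ht => ?_) hx hy
    rcases ht with ht | ht
    · linarith [hgΔ t ht]
    · exact (hgJ t ht).2
  intro x hx
  refine ⟨(hgJ x hx).1, (hgJ x hx).2, ?_⟩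
  have hmidΔ : (a + b) / 2 ∈ Icc a b := ⟨by linarith [hyΔ.1, hyΔ.2], by linarith [hyΔ.1, hyΔ.2]⟩
  have hdist : |x - (a + b) / 2| ≤ 3 / 2 * (v - u) := by
    rw [abs_le]; constructor <;> linarith [hx.1, hx.2, hyΔ.1, hyΔ.2, hyJ.1, hyJ.2]
  calc |F x| ≤ |F ((a + b) / 2)| + |F x - F ((a + b) / 2)| := by
        linarith [abs_sub_abs_le_abs_sub (F x) (F ((a + b) / 2))]
    _ ≤ (v - u) * V / 2 + 3 / 2 * V * (3 / 2 * (v - u)) := by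
        grw [hmid, hFlip _ (Or.inl hmidΔ) x (Or.inr hx), hdist]
    _ ≤ 5 * (v - u) * V := by nlinarith [mul_nonneg (sub_nonneg.mpr (hyJ.1.trans hyJ.2)) hVnonneg]

end MeetingIntervals

lemma div_le_length_mul_div_two {c K V μ H ℓ : ℝ} (hc : 0 < c) (hK : 1 ≤ K) (hμ : 0 ≤ μ)
    (hH₀ : 0 < H) (hH : H = V * μ / √c) (hℓ : ℓ = 2 * K * √c / H) : c / μ ≤ ℓ * V / 2 := by
  have hsc : √c ≠ 0 := (Real.sqrt_pos.mpr hc).ne'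
  obtain ⟨hV, hμ'⟩ : V ≠ 0 ∧ μ ≠ 0 := by
    refine mul_ne_zero_iff.mp fun h => ?_
    simp [hH, h] at hH₀
  have : ℓ * V / 2 = K * (c / μ) := by
    rw [hℓ, hH]
    field_simp
    rw [Real.sq_sqrt hc.le]
  rw [this]
  exact le_mul_of_one_le_left (div_nonneg hc.le hμ) hK

theorem lemma_vp_general
    (i j c₀ C₀ c lam K : ℝ) (R n k l m : ℕ)
    (hc : 0 < c) (hR : 2 ≤ R)
    (hK : 1 ≤ K)
    (I : Set ℝ)
    (f f' f'' : ℝ → ℝ)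
    (hf' : ∀ x ∈ I, HasDerivWithinAt f (f' x) I x)
    (hf'' : ∀ x ∈ I, HasDerivWithinAt f' (f'' x) I x)
    (hbounds : ∀ x ∈ I, c₀ ≤ |f' x| ∧ |f' x| ≤ C₀ ∧ c₀ ≤ |f'' x| ∧ |f'' x| ≤ C₀)
    (A B C : ℤ)
    (c₁' : ℝ)
    (hc₁1 : 2 * K * Real.sqrt c * (2 : ℝ) ^ (-(k : ℝ)) * (R : ℝ) ≤ c₁')
    (hc₁2 : 8 * C₀ * c₁' * (R : ℝ) ^ (-(n : ℝ)) ≤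
      (2 : ℝ) ^ (-(m : ℝ)) * (R : ℝ) ^ (-(lam * (l : ℝ))))
    (a b V H : ℝ) (hΔI : Set.Icc a b ⊆ I)
    (hV : IsLeast ((fun x => |(A : ℝ) - (B : ℝ) * f' x|) '' Set.Icc a b) V)
    (hH : H = V * Mnum i j A B / Real.sqrt c)
    (hlen : b - a = 2 * K * Real.sqrt c / H)
    (hF₁ : |FL A B C f ((a + b) / 2)| ≤ c / Mnum i j A B)
    (hHlow : (2 : ℝ) ^ (k : ℝ) * (R : ℝ) ^ ((n : ℝ) - 1) ≤ H)
    (hVlow : (2 : ℝ) ^ (-(m : ℝ) - 1) * (R : ℝ) ^ (-(lam * (l : ℝ))) * (C₀ + 1) *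
      max |(A : ℝ)| |(B : ℝ)| < V)
    (u v : ℝ) (hJlen : v - u = c₁' * (R : ℝ) ^ (-(n : ℝ)))
    (hJI : Set.Icc u v ⊆ I)
    (hmeet : (Set.Icc a b ∩ Set.Icc u v).Nonempty) :
    ∀ x ∈ Set.Icc u v,
      V / 2 ≤ |(A : ℝ) - (B : ℝ) * f' x| ∧
      |(A : ℝ) - (B : ℝ) * f' x| ≤ 3 / 2 * V ∧
      |FL A B C f x| ≤ 5 * (v - u) * V := by
  set M := max |(A : ℝ)| |(B : ℝ)|
  obtain ⟨y, hyΔ, hyJ⟩ := hmeet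
  have hC₀ : 0 ≤ C₀ := (abs_nonneg _).trans (hbounds y (hΔI hyΔ)).2.2.2
  have hM : 0 ≤ M := le_max_of_le_left (abs_nonneg _)
  have hRpos : (0 : ℝ) < R := by positivity
  have hHpos : 0 < H := lt_of_lt_of_le (by positivity) hHlow
  have hLJ : C₀ * M * (v - u) ≤ V / 4 := by
    set P := (2 : ℝ) ^ (-(m : ℝ)) * (R : ℝ) ^ (-(lam * (l : ℝ)))
    have h8 : 8 * C₀ * (v - u) ≤ P := by rw [hJlen, ← mul_assoc]; exact hc₁2
    have hVlow' : P * (C₀ + 1) * M < 2 * V := by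
      rw [Real.rpow_sub_one two_ne_zero] at hVlow
      linarith
    nlinarith [mul_le_mul_of_nonneg_right h8 hM, (by positivity : 0 ≤ P * M * C₀)]
  have hΔJ : b - a ≤ v - u := by
    rw [hlen, hJlen]
    calc 2 * K * √c / H ≤ 2 * K * √c * 2 ^ (-(k : ℝ)) * R * (R : ℝ) ^ (-(n : ℝ)) :=
          div_le_mul_rpow_of_rpow_mul_rpow_le (by positivity) hRpos hHlow
      _ ≤ c₁' * (R : ℝ) ^ (-(n : ℝ)) := by gcongr
  have hmid : |FL A B C f ((a + b) / 2)| ≤ (v - u) * V / 2 :=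
    calc |FL A B C f ((a + b) / 2)| ≤ c / Mnum i j A B := hF₁
      _ ≤ (b - a) * V / 2 := div_le_length_mul_div_two hc hK (Mnum_nonneg i j A B) hHpos hH hlen
      _ ≤ (v - u) * V / 2 := by have := hV.nonneg_of_abs_image; gcongr
  refine abs_bounds_of_meets_Icc_of_isLeast (g := fun x => (A : ℝ) - (B : ℝ) * f' x)
    (g' := fun x => -((B : ℝ) * f'' x)) (L := C₀ * M)
    (fun x hx => hasDerivWithinAt_FL (hf' x hx))
    (fun x hx => ((hf'' x hx).const_mul (B : ℝ)).const_sub (A : ℝ)) (fun x hx => ?_)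
    hΔI hJI ⟨y, hyΔ, hyJ⟩ hV hLJ hΔJ hmid
  rw [abs_neg, abs_mul, mul_comm C₀]
  exact mul_le_mul (le_max_right _ _) (hbounds x hx).2.2.2 (abs_nonneg _) hM

/-- On any interval `J` of length `c₁'R^(−n)` meeting an interval `Δ` of class
`C(n,k,l,m)`, provided `8C₀c₁'R^(−n) ≤ 2^(−m)R^(−λl)`, one has
`V/2 ≤ |F_L'(x)| ≤ (3/2)V` and `|F_L(x)| ≤ 5|J|V` for all `x ∈ J`. -/
theorem lemma_vp
    (i j c₀ C₀ c lam K : ℝ) (R n k l m : ℕ)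
    (hi : 0 < i) (hij : i ≤ j) (hj : j < 1) (hsum : i + j = 1)
    (hc₀ : 0 < c₀) (hC₀ : c₀ ≤ C₀) (hc : 0 < c) (hR : 2 ≤ R)
    (hlam : 0 < lam) (hK : 1 ≤ K) (hn : 1 ≤ n)
    (I : Set ℝ) (hI : I.OrdConnected)
    (f f' f'' : ℝ → ℝ)
    (hf' : ∀ x ∈ I, HasDerivWithinAt f (f' x) I x)
    (hf'' : ∀ x ∈ I, HasDerivWithinAt f' (f'' x) I x)
    (hbounds : ∀ x ∈ I, c₀ ≤ |f' x| ∧ |f' x| ≤ C₀ ∧ c₀ ≤ |f'' x| ∧ |f'' x| ≤ C₀)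
    (A B C : ℤ) (hAB : ¬(A = 0 ∧ B = 0))
    (c₁' : ℝ) (hc₁pos : 0 < c₁')
    (hc₁1 : 2 * K * Real.sqrt c * (2 : ℝ) ^ (-(k : ℝ)) * (R : ℝ) ≤ c₁')
    (hc₁2 : 8 * C₀ * c₁' * (R : ℝ) ^ (-(n : ℝ)) ≤
      (2 : ℝ) ^ (-(m : ℝ)) * (R : ℝ) ^ (-(lam * (l : ℝ))))
    (a b V H x₀ : ℝ) (hab : a ≤ b) (hΔI : Set.Icc a b ⊆ I)
    (hV : IsLeast ((fun x => |(A : ℝ) - (B : ℝ) * f' x|) '' Set.Icc a b) V)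
    (hx₀mem : x₀ ∈ Set.Icc a b) (hx₀ : |(A : ℝ) - (B : ℝ) * f' x₀| = V)
    (hH : H = V * Mnum i j A B / Real.sqrt c)
    (hlen : b - a = 2 * K * Real.sqrt c / H)
    (hF₁ : |FL A B C f ((a + b) / 2)| ≤ c / Mnum i j A B)
    (hHlow : (2 : ℝ) ^ (k : ℝ) * (R : ℝ) ^ ((n : ℝ) - 1) ≤ H)
    (hHup : H < (2 : ℝ) ^ ((k : ℝ) + 1) * (R : ℝ) ^ ((n : ℝ) - 1))
    (hVlow : (2 : ℝ) ^ (-(m : ℝ) - 1) * (R : ℝ) ^ (-(lam * (l : ℝ))) * (C₀ + 1) *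
      max |(A : ℝ)| |(B : ℝ)| < V)
    (hVup : V ≤ (2 : ℝ) ^ (-(m : ℝ)) * (R : ℝ) ^ (-(lam * (l : ℝ))) * (C₀ + 1) *
      max |(A : ℝ)| |(B : ℝ)|)
    (u v : ℝ) (hJlen : v - u = c₁' * (R : ℝ) ^ (-(n : ℝ)))
    (hJI : Set.Icc u v ⊆ I)
    (hmeet : (Set.Icc a b ∩ Set.Icc u v).Nonempty) :
    ∀ x ∈ Set.Icc u v,
      V / 2 ≤ |(A : ℝ) - (B : ℝ) * f' x| ∧
      |(A : ℝ) - (B : ℝ) * f' x| ≤ 3 / 2 * V ∧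
      |FL A B C f x| ≤ 5 * (v - u) * V :=
  lemma_vp_general i j c₀ C₀ c lam K R n k l m hc hR hK I f f' f'' hf' hf'' hbounds A B C c₁' hc₁1
    hc₁2 a b V H hΔI hV hH hlen hF₁ hHlow hVlow u v hJlen hJI hmeet
end

section
/- Let (A₁,B₁,C₁) and (A₂,B₂,C₂) be triples of integers with (A₁,B₁) ≠ (0,0) and (A₂,B₂) ≠ (0,0), defining two distinct parallel lines A_t x − B_t y + C_t = 0 (so A₁B₂ = A₂B₁ but the two solution sets differ). Suppose |A₂| ≤ |A₁| and |B₂| ≤ |B₁|. Then for every (x,y) ∈ ℝ²: |A₁x − B₁y + C₁| + |A₂x − B₂y + C₂| ≥ 1 / min{|A₁|, |B₁|}. -/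
/-!
Since `A₁B₂ = A₂B₁`, suitable combinations of the forms `f₁ = A₁x − B₁y + C₁` and
`f₂ = A₂x − B₂y + C₂` are constant: `A₁ f₂ − A₂ f₁ = A₁C₂ − A₂C₁` and `B₁ f₂ − B₂ f₁ = B₁C₂ − B₂C₁`.
For distinct parallel lines these are nonzero integers, hence at least `1` in absolute value,
while the triangle inequality bounds them by `|A₁| (|f₁| + |f₂|)` and `|B₁| (|f₁| + |f₂|)`.
-/

theorem setOf_eq_zero_eq_of_mul_eq_mul {α M₀ : Type*} [MulZeroClass M₀] [NoZeroDivisors M₀]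
    {f g : α → M₀} {s t : M₀} (hs : s ≠ 0) (ht : t ≠ 0) (h : ∀ p, s * g p = t * f p) :
    {p | f p = 0} = {p | g p = 0} := by
  ext p
  rw [Set.mem_ofPred_eq, Set.mem_ofPred_eq, ← mul_eq_zero_iff_left ht, ← h p,
    mul_eq_zero_iff_left hs]

theorem mul_ne_mul_of_lines_ne_of_left_ne_zero {A₁ B₁ C₁ A₂ B₂ C₂ : ℤ}
    (h2 : ¬(A₂ = 0 ∧ B₂ = 0)) (hpar : A₁ * B₂ = A₂ * B₁) (hA₁ : A₁ ≠ 0)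
    (hdist : {p : ℝ × ℝ | (A₁ : ℝ) * p.1 - (B₁ : ℝ) * p.2 + (C₁ : ℝ) = 0} ≠
             {p : ℝ × ℝ | (A₂ : ℝ) * p.1 - (B₂ : ℝ) * p.2 + (C₂ : ℝ) = 0}) :
    A₁ * C₂ ≠ A₂ * C₁ := by
  intro hC
  have hA₂ : A₂ ≠ 0 := by
    rintro rfl
    exact h2 ⟨rfl, by simpa [hA₁] using hpar⟩
  have hpar' : (A₁ : ℝ) * B₂ = A₂ * B₁ := by exact_mod_cast hpar
  have hC' : (A₁ : ℝ) * C₂ = A₂ * C₁ := by exact_mod_cast hC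
  exact hdist <| setOf_eq_zero_eq_of_mul_eq_mul (s := (A₁ : ℝ)) (t := (A₂ : ℝ))
    (by exact_mod_cast hA₁) (by exact_mod_cast hA₂)
    fun p => by linear_combination -p.2 * hpar' + hC'

theorem mul_ne_mul_of_lines_ne_of_right_ne_zero {A₁ B₁ C₁ A₂ B₂ C₂ : ℤ}
    (h2 : ¬(A₂ = 0 ∧ B₂ = 0)) (hpar : A₁ * B₂ = A₂ * B₁) (hB₁ : B₁ ≠ 0)
    (hdist : {p : ℝ × ℝ | (A₁ : ℝ) * p.1 - (B₁ : ℝ) * p.2 + (C₁ : ℝ) = 0} ≠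
             {p : ℝ × ℝ | (A₂ : ℝ) * p.1 - (B₂ : ℝ) * p.2 + (C₂ : ℝ) = 0}) :
    B₁ * C₂ ≠ B₂ * C₁ := by
  intro hC
  have hB₂ : B₂ ≠ 0 := by
    rintro rfl
    exact h2 ⟨by simpa [hB₁] using hpar.symm, rfl⟩
  have hpar' : (A₁ : ℝ) * B₂ = A₂ * B₁ := by exact_mod_cast hpar
  have hC' : (B₁ : ℝ) * C₂ = B₂ * C₁ := by exact_mod_cast hC
  exact hdist <| setOf_eq_zero_eq_of_mul_eq_mul (s := (B₁ : ℝ)) (t := (B₂ : ℝ))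
    (by exact_mod_cast hB₁) (by exact_mod_cast hB₂)
    fun p => by linear_combination -p.1 * hpar' + hC'

theorem abs_mul_sub_mul_le_of_parallel {K : Type*} [Field K] [LinearOrder K]
    [IsStrictOrderedRing K] {a₁ b₁ c₁ a₂ b₂ c₂ : K} (hpar : a₁ * b₂ = a₂ * b₁)
    (ha : |a₂| ≤ |a₁|) (x y : K) :
    |a₁ * c₂ - a₂ * c₁| ≤ |a₁| * (|a₁ * x - b₁ * y + c₁| + |a₂ * x - b₂ * y + c₂|) := by
  set f₁ := a₁ * x - b₁ * y + c₁
  set f₂ := a₂ * x - b₂ * y + c₂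
  calc |a₁ * c₂ - a₂ * c₁| = |a₁ * f₂ - a₂ * f₁| := by
        congr 1
        linear_combination y * hpar
    _ ≤ |a₁| * |f₂| + |a₂| * |f₁| := by
        simpa only [abs_mul] using abs_sub (a₁ * f₂) (a₂ * f₁)
    _ ≤ |a₁| * |f₂| + |a₁| * |f₁| := by gcongr
    _ = |a₁| * (|f₁| + |f₂|) := by ring

theorem one_le_abs_mul_of_parallel_of_mul_ne_mul {A₁ B₁ C₁ A₂ B₂ C₂ : ℤ}
    (hpar : A₁ * B₂ = A₂ * B₁) (hA : |A₂| ≤ |A₁|) (hC : A₁ * C₂ ≠ A₂ * C₁) (x y : ℝ) :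
    1 ≤ |(A₁ : ℝ)| * (|(A₁ : ℝ) * x - (B₁ : ℝ) * y + (C₁ : ℝ)| +
      |(A₂ : ℝ) * x - (B₂ : ℝ) * y + (C₂ : ℝ)|) :=
  calc (1 : ℝ) ≤ |((A₁ * C₂ - A₂ * C₁ : ℤ) : ℝ)| := by
        exact_mod_cast Int.one_le_abs (sub_ne_zero.mpr hC)
    _ ≤ _ := by
        push_cast
        exact abs_mul_sub_mul_le_of_parallel (by exact_mod_cast hpar) (by exact_mod_cast hA) x y

theorem parallel_lines_bound_general
    (A₁ B₁ C₁ A₂ B₂ C₂ : ℤ)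
    (h2 : ¬(A₂ = 0 ∧ B₂ = 0))
    (hpar : A₁ * B₂ = A₂ * B₁)
    (hdist : {p : ℝ × ℝ | (A₁ : ℝ) * p.1 - (B₁ : ℝ) * p.2 + (C₁ : ℝ) = 0} ≠
             {p : ℝ × ℝ | (A₂ : ℝ) * p.1 - (B₂ : ℝ) * p.2 + (C₂ : ℝ) = 0})
    (hA : |A₂| ≤ |A₁|) (hB : |B₂| ≤ |B₁|) :
    ∀ x y : ℝ,
      1 / min |(A₁ : ℝ)| |(B₁ : ℝ)| ≤
        |(A₁ : ℝ) * x - (B₁ : ℝ) * y + (C₁ : ℝ)| +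
        |(A₂ : ℝ) * x - (B₂ : ℝ) * y + (C₂ : ℝ)| := by
  intro x y
  rcases eq_or_ne (min |(A₁ : ℝ)| |(B₁ : ℝ)|) 0 with h0 | h0
  · rw [h0, div_zero]
    positivity
  rw [div_le_iff₀ (lt_of_le_of_ne (by positivity) h0.symm), mul_comm]
  rcases min_choice |(A₁ : ℝ)| |(B₁ : ℝ)| with hm | hm <;> rw [hm] at h0 ⊢
  · exact one_le_abs_mul_of_parallel_of_mul_ne_mul hpar hA
      (mul_ne_mul_of_lines_ne_of_left_ne_zero h2 hpar (by simpa using h0) hdist) x y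
  · -- the substitution `(x, y) ↦ (-y, -x)` exchanges the roles of the coefficients `A` and `B`
    have hswap := one_le_abs_mul_of_parallel_of_mul_ne_mul
      (A₁ := B₁) (B₁ := A₁) (A₂ := B₂) (B₂ := A₂) (by linear_combination -hpar) hB
      (mul_ne_mul_of_lines_ne_of_right_ne_zero h2 hpar (by simpa using h0) hdist) (-y) (-x)
    rwa [show (B₁ : ℝ) * -y - A₁ * -x + C₁ = A₁ * x - B₁ * y + C₁ by ring,
      show (B₂ : ℝ) * -y - A₂ * -x + C₂ = A₂ * x - B₂ * y + C₂ by ring] at hswap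

/-- For two distinct parallel integer lines `A_t x − B_t y + C_t = 0` with
`|A₂| ≤ |A₁|` and `|B₂| ≤ |B₁|`, the sum of the two linear forms at any point of the
plane is at least `1 / min{|A₁|, |B₁|}`. -/
theorem parallel_lines_bound
    (A₁ B₁ C₁ A₂ B₂ C₂ : ℤ)
    (h1 : ¬(A₁ = 0 ∧ B₁ = 0)) (h2 : ¬(A₂ = 0 ∧ B₂ = 0))
    (hpar : A₁ * B₂ = A₂ * B₁)
    (hdist : {p : ℝ × ℝ | (A₁ : ℝ) * p.1 - (B₁ : ℝ) * p.2 + (C₁ : ℝ) = 0} ≠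
             {p : ℝ × ℝ | (A₂ : ℝ) * p.1 - (B₂ : ℝ) * p.2 + (C₂ : ℝ) = 0})
    (hA : |A₂| ≤ |A₁|) (hB : |B₂| ≤ |B₁|) :
    ∀ x y : ℝ,
      1 / min |(A₁ : ℝ)| |(B₁ : ℝ)| ≤
        |(A₁ : ℝ) * x - (B₁ : ℝ) * y + (C₁ : ℝ)| +
        |(A₂ : ℝ) * x - (B₂ : ℝ) * y + (C₂ : ℝ)| :=
  parallel_lines_bound_general A₁ B₁ C₁ A₂ B₂ C₂ h2 hpar hdist hA hB
end

section
/- Let p, r be integers, q a positive integer, and let i, j ≥ 0 be real numbers with i + j = 1. Then there exists a triple of integers (A₀, B₀, C₀) with (A₀, B₀) ≠ (0,0) such that A₀p − B₀r + C₀q = 0, |A₀| ≤ q^i and |B₀| ≤ q^j. Moreover, for any c > 0 and any (x, y) ∈ ℝ² with |x − p/q| ≤ (c/2)·q^{−1−i} and |y − r/q| ≤ (c/2)·q^{−1−j}, this triple satisfies |A₀x − B₀y + C₀| ≤ c·q^{−1}. -/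
/-!
Pigeonhole (the elementary form of Minkowski's theorem for the lattice `A p ≡ B r (mod q)`):
with `m = ⌊q^i⌋` and `n = ⌊q^j⌋` there are `(m + 1)(n + 1) > q^i q^j = q` pairs `(a, b)` with
`0 ≤ a ≤ m`, `0 ≤ b ≤ n`, so two of them have the same residue `a p - b r` mod `q`; their
difference `(A₀, B₀)` satisfies `q ∣ A₀ p - B₀ r`, which fixes `C₀`. Since the line passes through
`(p/q, r/q)`, its value at `(x, y)` is `A₀ (x - p/q) - B₀ (y - r/q)`, and each of the two terms is
at most `q^i · (c/2) q^(-1-i) = c/(2q)`, resp. `q^j · (c/2) q^(-1-j) = c/(2q)`.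
-/

open Real

theorem exists_abs_le_dvd_mul_sub_mul (p r : ℤ) {q m n : ℕ} [NeZero q]
    (h : q < (m + 1) * (n + 1)) :
    ∃ A B : ℤ, ¬(A = 0 ∧ B = 0) ∧ |A| ≤ m ∧ |B| ≤ n ∧ (q : ℤ) ∣ A * p - B * r := by
  obtain ⟨a, b, hab, hres⟩ := Fintype.exists_ne_map_eq_of_card_lt
    (fun v : Fin (m + 1) × Fin (n + 1) => ((v.1 * p - v.2 * r : ℤ) : ZMod q))
    (by simpa [ZMod.card] using h)
  have ha₁ := a.1.isLt; have ha₂ := a.2.isLt; have hb₁ := b.1.isLt; have hb₂ := b.2.isLt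
  refine ⟨b.1 - a.1, b.2 - a.2, ?_, by rw [abs_le]; omega, by rw [abs_le]; omega, ?_⟩
  · rintro ⟨h₁, h₂⟩
    exact hab (Prod.ext (Fin.ext (by omega)) (Fin.ext (by omega)))
  · have := (ZMod.intCast_eq_intCast_iff_dvd_sub _ _ q).mp hres
    convert this using 1
    ring

theorem mul_lt_floor_add_one_mul_floor_add_one {x y : ℝ} (hx : 0 ≤ x) (hy : 0 ≤ y) :
    x * y < (⌊x⌋₊ + 1) * (⌊y⌋₊ + 1) :=
  mul_lt_mul'' (Nat.lt_floor_add_one x) (Nat.lt_floor_add_one y) hx hy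

theorem abs_sub_add_le_of_mul_sub_mul_add_mul_eq_zero {A B C p r q x y a b ε δ : ℝ}
    (hq : q ≠ 0) (hline : A * p - B * r + C * q = 0)
    (hA : |A| ≤ a) (hB : |B| ≤ b) (hx : |x - p / q| ≤ ε) (hy : |y - r / q| ≤ δ) :
    |A * x - B * y + C| ≤ a * ε + b * δ := by
  have hshift : A * x - B * y + C = A * (x - p / q) - B * (y - r / q) := by
    field_simp
    linear_combination hline
  rw [hshift]
  calc |A * (x - p / q) - B * (y - r / q)|
      ≤ |A| * |x - p / q| + |B| * |y - r / q| := by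
        simpa only [abs_mul] using abs_sub (A * (x - p / q)) (B * (y - r / q))
    _ ≤ a * ε + b * δ := by
        gcongr
        · exact (abs_nonneg A).trans hA
        · exact (abs_nonneg B).trans hB

theorem rpow_mul_rpow_neg_one_sub {q : ℝ} (hq : 0 < q) (i : ℝ) :
    q ^ i * q ^ (-1 - i) = q⁻¹ := by
  rw [← rpow_add hq, add_sub_cancel, rpow_neg_one]

theorem minkowski_line_through_rational_point_general
    (p r : ℤ) (q : ℕ) (hq : 0 < q) (i j : ℝ)
    (hij : i + j = 1) :
    ∃ A₀ B₀ C₀ : ℤ, ¬(A₀ = 0 ∧ B₀ = 0) ∧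
      A₀ * p - B₀ * r + C₀ * (q : ℤ) = 0 ∧
      |(A₀ : ℝ)| ≤ (q : ℝ) ^ i ∧ |(B₀ : ℝ)| ≤ (q : ℝ) ^ j ∧
      ∀ c : ℝ, 0 < c → ∀ x y : ℝ,
        |x - (p : ℝ) / (q : ℝ)| ≤ c / 2 * (q : ℝ) ^ (-1 - i) →
        |y - (r : ℝ) / (q : ℝ)| ≤ c / 2 * (q : ℝ) ^ (-1 - j) →
        |(A₀ : ℝ) * x - (B₀ : ℝ) * y + (C₀ : ℝ)| ≤ c / (q : ℝ) := by
  have : NeZero q := ⟨hq.ne'⟩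
  have hq₀ : (0 : ℝ) < q := by exact_mod_cast hq
  have hqi := rpow_nonneg hq₀.le i
  have hqj := rpow_nonneg hq₀.le j
  have hcard : q < (⌊(q : ℝ) ^ i⌋₊ + 1) * (⌊(q : ℝ) ^ j⌋₊ + 1) := by
    have := mul_lt_floor_add_one_mul_floor_add_one hqi hqj
    rw [← rpow_add hq₀, hij, rpow_one] at this
    exact_mod_cast this
  obtain ⟨A, B, hAB, hA, hB, ⟨k, hk⟩⟩ := exists_abs_le_dvd_mul_sub_mul p r hcard
  have hA' : |(A : ℝ)| ≤ (q : ℝ) ^ i :=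
    le_trans (by exact_mod_cast hA) (Nat.floor_le hqi)
  have hB' : |(B : ℝ)| ≤ (q : ℝ) ^ j :=
    le_trans (by exact_mod_cast hB) (Nat.floor_le hqj)
  have hline : A * p - B * r + (-k) * (q : ℤ) = 0 := by rw [hk]; ring
  refine ⟨A, B, -k, hAB, hline, hA', hB', fun c _ x y hx hy => ?_⟩
  calc _ ≤ (q : ℝ) ^ i * (c / 2 * (q : ℝ) ^ (-1 - i))
          + (q : ℝ) ^ j * (c / 2 * (q : ℝ) ^ (-1 - j)) :=
        abs_sub_add_le_of_mul_sub_mul_add_mul_eq_zero hq₀.ne' (by exact_mod_cast hline)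
          hA' hB' hx hy
    _ = c / q := by
        rw [mul_left_comm, rpow_mul_rpow_neg_one_sub hq₀, mul_left_comm,
          rpow_mul_rpow_neg_one_sub hq₀]
        ring

/-- (Minkowski) Through any rational point `(p/q, r/q)` there is an integer line
`A₀x − B₀y + C₀ = 0` with `(A₀,B₀) ≠ (0,0)`, `|A₀| ≤ q^i`, `|B₀| ≤ q^j`; moreover any
point within `(c/2)q^(−1−i) × (c/2)q^(−1−j)` of `(p/q, r/q)` satisfies
`|A₀x − B₀y + C₀| ≤ c/q`. -/
theorem minkowski_line_through_rational_point
    (p r : ℤ) (q : ℕ) (hq : 0 < q) (i j : ℝ) (hi : 0 ≤ i) (hj : 0 ≤ j)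
    (hij : i + j = 1) :
    ∃ A₀ B₀ C₀ : ℤ, ¬(A₀ = 0 ∧ B₀ = 0) ∧
      A₀ * p - B₀ * r + C₀ * (q : ℤ) = 0 ∧
      |(A₀ : ℝ)| ≤ (q : ℝ) ^ i ∧ |(B₀ : ℝ)| ≤ (q : ℝ) ^ j ∧
      ∀ c : ℝ, 0 < c → ∀ x y : ℝ,
        |x - (p : ℝ) / (q : ℝ)| ≤ c / 2 * (q : ℝ) ^ (-1 - i) →
        |y - (r : ℝ) / (q : ℝ)| ≤ c / 2 * (q : ℝ) ^ (-1 - j) →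
        |(A₀ : ℝ) * x - (B₀ : ℝ) * y + (C₀ : ℝ)| ≤ c / (q : ℝ) :=
  minkowski_line_through_rational_point_general p r q hq i j hij
end

section
/- Let f be differentiable on an interval I ⊆ ℝ, and let L₁(A₁,B₁,C₁), L₂(A₂,B₂,C₂) be two lines with real coefficients such that D := A₁B₂ − A₂B₁ ≠ 0; let P = (x_P, y_P) be their unique point of intersection. Define F_{L_t}(x) := A_t x − B_t f(x) + C_t. Suppose x₁, x₂ ∈ I satisfy |F_{L₁}(x₁)| ≤ η₁ and |F_{L₂}(x₂)| ≤ η₂, and that |A₂ − B₂ f'(x)| ≤ W for every x between x₁ and x₂. Then |x₁ − x_P| ≤ ( |B₁|·(η₂ + |x₁ − x₂|·W) + |B₂|·η₁ ) / |D| and |f(x₁) − y_P| ≤ ( |A₁|·(η₂ + |x₁ − x₂|·W) + |A₂|·η₁ ) / |D|. -/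
/-!
Both coordinates of `(x₁, f x₁) - P` are solved by Cramer's rule from the two residuals
`F_{L₁}(x₁)` and `F_{L₂}(x₁)`, each with denominator `D = A₁B₂ - A₂B₁`. The first residual is at
most `η₁` by hypothesis; the second is known to be small only at `x₂`, and is carried over to `x₁`
by the mean value inequality, since `F_{L₂}' = A₂ - B₂ f'`.
-/

open Set

theorem abs_le_abs_add_mul_of_hasDerivWithinAt_uIcc {g g' : ℝ → ℝ} {a b W : ℝ}
    (hg : ∀ x ∈ uIcc a b, HasDerivWithinAt g (g' x) (uIcc a b) x)
    (hW : ∀ x ∈ uIcc a b, |g' x| ≤ W) :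
    |g a| ≤ |g b| + |a - b| * W := by
  have hmvt : |g a - g b| ≤ W * |a - b| :=
    Convex.norm_image_sub_le_of_norm_hasDerivWithin_le hg hW (convex_uIcc a b)
      right_mem_uIcc left_mem_uIcc
  linarith [abs_sub_abs_le_abs_sub (g a) (g b), mul_comm W |a - b|]

theorem x_sub_mul_det_eq_of_intersection {A₁ B₁ C₁ A₂ B₂ C₂ xP yP : ℝ}
    (hP1 : A₁ * xP - B₁ * yP + C₁ = 0) (hP2 : A₂ * xP - B₂ * yP + C₂ = 0) (x y : ℝ) :
    (x - xP) * (A₁ * B₂ - A₂ * B₁) =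
      B₂ * (A₁ * x - B₁ * y + C₁) - B₁ * (A₂ * x - B₂ * y + C₂) := by
  linear_combination -B₂ * hP1 + B₁ * hP2

theorem y_sub_mul_det_eq_of_intersection {A₁ B₁ C₁ A₂ B₂ C₂ xP yP : ℝ}
    (hP1 : A₁ * xP - B₁ * yP + C₁ = 0) (hP2 : A₂ * xP - B₂ * yP + C₂ = 0) (x y : ℝ) :
    (y - yP) * (A₁ * B₂ - A₂ * B₁) =
      A₂ * (A₁ * x - B₁ * y + C₁) - A₁ * (A₂ * x - B₂ * y + C₂) := by
  linear_combination -A₂ * hP1 + A₁ * hP2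

theorem abs_le_div_of_mul_eq_sub {u D a b e₁ e₂ η₁ η₂ : ℝ} (hD : D ≠ 0)
    (hu : u * D = a * e₁ - b * e₂) (he₁ : |e₁| ≤ η₁) (he₂ : |e₂| ≤ η₂) :
    |u| ≤ (|b| * η₂ + |a| * η₁) / |D| := by
  rw [le_div_iff₀ (abs_pos.mpr hD)]
  calc |u| * |D| = |a * e₁ - b * e₂| := by rw [← abs_mul, hu]
    _ ≤ |a| * |e₁| + |b| * |e₂| := by
      rw [← abs_mul, ← abs_mul]
      exact abs_sub _ _
    _ ≤ |a| * η₁ + |b| * η₂ := by gcongr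
    _ = |b| * η₂ + |a| * η₁ := add_comm _ _

/-- Bounds for the distance between a point `(x₁, f(x₁))` on a curve and the
intersection point `P` of two non-parallel lines, in terms of `|F_{L₁}(x₁)|`,
`|F_{L₂}(x₂)|` and a bound `W` on `|A₂ − B₂ f'|` between `x₁` and `x₂`. -/
theorem distance_to_intersection_point
    (I : Set ℝ) (hI : I.OrdConnected)
    (f f' : ℝ → ℝ) (hf : ∀ x ∈ I, HasDerivWithinAt f (f' x) I x)
    (A₁ B₁ C₁ A₂ B₂ C₂ : ℝ) (hD : A₁ * B₂ - A₂ * B₁ ≠ 0)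
    (xP yP : ℝ)
    (hP1 : A₁ * xP - B₁ * yP + C₁ = 0) (hP2 : A₂ * xP - B₂ * yP + C₂ = 0)
    (x₁ x₂ : ℝ) (hx₁ : x₁ ∈ I) (hx₂ : x₂ ∈ I)
    (η₁ η₂ W : ℝ)
    (hF1 : |A₁ * x₁ - B₁ * f x₁ + C₁| ≤ η₁)
    (hF2 : |A₂ * x₂ - B₂ * f x₂ + C₂| ≤ η₂)
    (hW : ∀ x ∈ Set.uIcc x₁ x₂, |A₂ - B₂ * f' x| ≤ W) :
    |x₁ - xP| ≤ (|B₁| * (η₂ + |x₁ - x₂| * W) + |B₂| * η₁) / |A₁ * B₂ - A₂ * B₁| ∧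
    |f x₁ - yP| ≤ (|A₁| * (η₂ + |x₁ - x₂| * W) + |A₂| * η₁) / |A₁ * B₂ - A₂ * B₁| := by
  have hsub : uIcc x₁ x₂ ⊆ I := hI.uIcc_subset hx₁ hx₂
  have hF2_deriv : ∀ x ∈ uIcc x₁ x₂, HasDerivWithinAt (fun x => A₂ * x - B₂ * f x + C₂)
      (A₂ - B₂ * f' x) (uIcc x₁ x₂) x := fun x hx => by
    simpa using (((hasDerivWithinAt_id x _).const_mul A₂).sub
      (((hf x (hsub hx)).mono hsub).const_mul B₂)).add_const C₂
  have hF2_at_x₁ : |A₂ * x₁ - B₂ * f x₁ + C₂| ≤ η₂ + |x₁ - x₂| * W :=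
    (abs_le_abs_add_mul_of_hasDerivWithinAt_uIcc hF2_deriv hW).trans (by gcongr)
  exact ⟨abs_le_div_of_mul_eq_sub hD (x_sub_mul_det_eq_of_intersection hP1 hP2 x₁ (f x₁)) hF1 hF2_at_x₁,
    abs_le_div_of_mul_eq_sub hD (y_sub_mul_det_eq_of_intersection hP1 hP2 x₁ (f x₁)) hF1 hF2_at_x₁⟩
end

section
/- Let f : I → ℝ be differentiable on an interval I with 0 < c₀ ≤ |f'(x)| ≤ C₀ for all x ∈ I. Let R ≥ 4 be an integer, n ≥ 1 an integer, c > 0, and set c₁ := 2cR²/c₀; assume 2C₀c₁ ≤ 1. For a rational number p/q in lowest terms with q ≥ 1, define Δ(p/q) := {x ∈ I : |f(x) − p/q| ≤ c/q²}. Let J ⊆ I be an interval of length c₁R^{−n}, subdivided into R closed subintervals of equal length c₁R^{−(n+1)}. Then at most 3 of these R subintervals intersect the union of the sets Δ(p/q) taken over all rationals p/q with R^{n−1} ≤ q² < R^n. -/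
/-!
By the mean value theorem `f` varies by at most `C₀ |J|` on `J`, while two distinct fractions
with `q², q'² < Rⁿ` are more than `R⁻ⁿ` apart. The choice of `c₁` makes `2c/q² + C₀ |J| ≤ R⁻ⁿ`,
so all points of `J` whose image is that close to such a fraction are close to the same one
`p/q`. As `|f'| ≥ c₀`, these points lie within `2c/(c₀q²) ≤ c₁R^(-(n+1))` of each other, so they
meet at most three consecutive subintervals.
-/

open Set

theorem Set.ncard_le_of_forall_le_add {S : Set ℕ} {k : ℕ} (h : ∀ t ∈ S, ∀ s ∈ S, t ≤ s + k) :
    S.ncard ≤ k + 1 := by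
  rcases S.eq_empty_or_nonempty with rfl | hne
  · simp
  have hmin : sInf S ∈ S := Nat.sInf_mem hne
  calc S.ncard ≤ (Icc (sInf S) (sInf S + k)).ncard :=
        ncard_le_ncard (fun t ht => ⟨Nat.sInf_le ht, h t ht _ hmin⟩) (finite_Icc _ _)
    _ = k + 1 := by rw [ncard_Icc_nat]; omega

theorem Fin.ncard_le_of_forall_le_add {N k : ℕ} {S : Set (Fin N)}
    (h : ∀ t ∈ S, ∀ s ∈ S, (t : ℕ) ≤ s + k) : S.ncard ≤ k + 1 := by
  rw [← ncard_image_of_injective S Fin.val_injective]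
  refine Set.ncard_le_of_forall_le_add ?_
  rintro _ ⟨t, ht, rfl⟩ _ ⟨s, hs, rfl⟩
  exact h t ht s hs

theorem Icc_add_mul_subset_Icc {a ℓ : ℝ} (hℓ : 0 ≤ ℓ) {t R : ℕ} (ht : t < R) :
    Icc (a + t * ℓ) (a + (t + 1) * ℓ) ⊆ Icc a (a + R * ℓ) := by
  have htR : (t : ℝ) + 1 ≤ R := by exact_mod_cast ht
  exact Icc_subset_Icc (by nlinarith [(t.cast_nonneg : (0 : ℝ) ≤ t)]) (by nlinarith)

theorem le_add_two_of_abs_sub_le {a ℓ x y : ℝ} (hℓ : 0 < ℓ) {t s : ℕ}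
    (hx : x ∈ Icc (a + t * ℓ) (a + (t + 1) * ℓ)) (hy : y ∈ Icc (a + s * ℓ) (a + (s + 1) * ℓ))
    (hxy : |x - y| ≤ ℓ) : t ≤ s + 2 := by
  have h : ((t : ℝ) - s - 1) * ℓ ≤ 1 * ℓ := by linarith [hx.1, hy.2, (abs_le.1 hxy).2]
  have h' : (t : ℝ) ≤ s + 2 := by linarith [le_of_mul_le_mul_right h hℓ]
  exact_mod_cast h'

theorem exists_abs_sub_eq_mul_abs_sub {s : Set ℝ} [s.OrdConnected] {f f' : ℝ → ℝ}
    (hf : ∀ z ∈ s, HasDerivWithinAt f (f' z) s z) {x y : ℝ} (hx : x ∈ s) (hy : y ∈ s) :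
    ∃ ξ ∈ s, |f x - f y| = |f' ξ| * |x - y| := by
  wlog hxy : x < y generalizing x y
  · rcases (not_lt.1 hxy).eq_or_lt with rfl | hyx
    · exact ⟨_, hx, by simp⟩
    · obtain ⟨ξ, hξ, h⟩ := this hy hx hyx
      exact ⟨ξ, hξ, by rw [abs_sub_comm, h, abs_sub_comm y]⟩
  have hsub : Icc x y ⊆ s := OrdConnected.out ‹_› hx hy
  obtain ⟨ξ, hξ, hslope⟩ := exists_hasDerivAt_eq_slope f f' hxy
    (fun z hz => ((hf z (hsub hz)).mono hsub).continuousWithinAt)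
    (fun z hz => ((hf z (hsub (Ioo_subset_Icc_self hz))).mono hsub).hasDerivAt
      (Icc_mem_nhds hz.1 hz.2))
  refine ⟨ξ, hsub (Ioo_subset_Icc_self hξ), ?_⟩
  rw [hslope, abs_div, abs_sub_comm x y, abs_sub_comm (f x) (f y),
    div_mul_cancel₀ _ (abs_ne_zero.2 (sub_ne_zero.2 hxy.ne'))]

theorem abs_sub_mem_Icc_of_abs_deriv_mem_Icc {s : Set ℝ} [s.OrdConnected] {f f' : ℝ → ℝ}
    {m M : ℝ} (hf : ∀ z ∈ s, HasDerivWithinAt f (f' z) s z) (hf' : ∀ z ∈ s, |f' z| ∈ Icc m M)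
    {x y : ℝ} (hx : x ∈ s) (hy : y ∈ s) : |f x - f y| ∈ Icc (m * |x - y|) (M * |x - y|) := by
  obtain ⟨ξ, hξ, h⟩ := exists_abs_sub_eq_mul_abs_sub hf hx hy
  rw [h]
  exact ⟨by gcongr; exact (hf' ξ hξ).1, by gcongr; exact (hf' ξ hξ).2⟩

theorem div_eq_div_of_abs_sub_lt_one_div_mul {p p' : ℤ} {q q' : ℕ} (hq : 0 < q) (hq' : 0 < q')
    (h : |(p : ℝ) / q - p' / q'| < 1 / (q * q')) : (p : ℝ) / q = p' / q' := by
  have hq₀ : (q : ℝ) ≠ 0 := by positivity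
  have hq₀' : (q' : ℝ) ≠ 0 := by positivity
  by_contra hne
  have hnum : p * q' - q * p' ≠ 0 := by
    refine sub_ne_zero.2 fun h₀ => hne ?_
    rw [div_eq_div_iff hq₀ hq₀', mul_comm (p' : ℝ)]
    exact_mod_cast h₀
  have hone : (1 : ℝ) ≤ |(p : ℝ) * q' - q * p'| := by exact_mod_cast Int.one_le_abs hnum
  have hqq : (0 : ℝ) < q * q' := by positivity
  rw [div_sub_div _ _ hq₀ hq₀', abs_div, abs_of_pos hqq, div_lt_div_iff_of_pos_right hqq] at h
  linarith

theorem abs_sub_le_of_near_rationals {u v ε D N : ℝ} {p p' : ℤ} {q q' : ℕ} (hq : 0 < q)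
    (hq' : 0 < q') (hqN : (q : ℝ) ^ 2 < N) (hq'N : (q' : ℝ) ^ 2 < N)
    (hu : |u - p / q| ≤ ε) (hv : |v - p' / q'| ≤ ε) (huv : |u - v| ≤ D)
    (hsep : 2 * ε + D ≤ 1 / N) : |u - v| ≤ 2 * ε := by
  have hqq : (q : ℝ) * q' < N := by nlinarith [sq_nonneg ((q : ℝ) - q')]
  have hdist : |(p : ℝ) / q - p' / q'| < 1 / (q * q') := by
    have h₁ := abs_sub_le ((p : ℝ) / q) u (p' / q')
    have h₂ := abs_sub_le u v (p' / q')
    rw [abs_sub_comm _ u] at h₁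
    linarith [one_div_lt_one_div_of_lt (by positivity) hqq]
  have heq := div_eq_div_of_abs_sub_lt_one_div_mul hq hq' hdist
  calc |u - v| ≤ |u - p / q| + |v - p' / q'| := by
        rw [heq, abs_sub_comm v]; exact abs_sub_le _ _ _
    _ ≤ 2 * ε := by linarith

theorem at_most_three_removed_subintervals_general
    (I : Set ℝ)
    (f f' : ℝ → ℝ) (hf : ∀ x ∈ I, HasDerivWithinAt f (f' x) I x)
    (c₀ C₀ : ℝ) (hc₀ : 0 < c₀)
    (hb : ∀ x ∈ I, c₀ ≤ |f' x| ∧ |f' x| ≤ C₀)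
    (R : ℕ) (hR : 4 ≤ R) (n : ℕ)
    (c c₁ : ℝ) (hc : 0 < c) (hc₁ : c₁ = 2 * c * (R : ℝ) ^ 2 / c₀)
    (hsmall : 2 * C₀ * c₁ ≤ 1)
    (a b : ℝ) (hab : b - a = c₁ * (R : ℝ) ^ (-(n : ℝ)))
    (hJ : Set.Icc a b ⊆ I) :
    Set.ncard {t : Fin R |
      ∃ x ∈ Set.Icc (a + (t : ℝ) * (c₁ * (R : ℝ) ^ (-((n : ℝ) + 1))))
                    (a + ((t : ℝ) + 1) * (c₁ * (R : ℝ) ^ (-((n : ℝ) + 1)))),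
        x ∈ I ∧ ∃ (p : ℤ) (q : ℕ), 0 < q ∧ Int.gcd p (q : ℤ) = 1 ∧
          (R : ℝ) ^ ((n : ℝ) - 1) ≤ (q : ℝ) ^ 2 ∧ (q : ℝ) ^ 2 < (R : ℝ) ^ (n : ℝ) ∧
          |f x - (p : ℝ) / (q : ℝ)| ≤ c / (q : ℝ) ^ 2} ≤ 3 := by
  have hR₁ : (1 : ℝ) ≤ R := by exact_mod_cast (show 1 ≤ R by omega)
  have hℓ : c₁ * (R : ℝ) ^ (-((n : ℝ) + 1)) = c₁ / ((R : ℝ) ^ (n : ℝ) * R) := by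
    rw [Real.rpow_neg (by positivity), Real.rpow_add_one (by positivity), div_eq_mul_inv]
  rw [Real.rpow_neg (by positivity), ← div_eq_mul_inv] at hab
  set N : ℝ := (R : ℝ) ^ (n : ℝ)
  set ℓ : ℝ := c₁ * (R : ℝ) ^ (-((n : ℝ) + 1))
  have hc₁₀ : 0 < c₁ := by rw [hc₁]; positivity
  have hℓ₀ : 0 < ℓ := by rw [hℓ]; positivity
  have hba : b = a + R * ℓ := by rw [hℓ]; field_simp at hab ⊢; linarith
  have hC₀ : c₀ ≤ C₀ :=
    (hb a (hJ ⟨le_rfl, by rw [hba]; exact le_add_of_nonneg_right (by positivity)⟩)).elim le_trans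
  have hrad (q : ℕ) (hq : (R : ℝ) ^ ((n : ℝ) - 1) ≤ q ^ 2) : c / q ^ 2 ≤ c₀ * ℓ / 2 := by
    rw [Real.rpow_sub_one (by positivity)] at hq
    calc c / q ^ 2 ≤ c / (N / R) := div_le_div_of_nonneg_left hc.le (by positivity) hq
      _ = c₀ * ℓ / 2 := by rw [hℓ, hc₁]; field_simp
  have hgap : 2 * (c₀ * ℓ / 2) + C₀ * (b - a) ≤ 1 / N := by
    have : c₀ * c₁ / R ≤ C₀ * c₁ := (div_le_self (by positivity) hR₁).trans (by gcongr)
    calc 2 * (c₀ * ℓ / 2) + C₀ * (b - a) = (c₀ * c₁ / R + C₀ * c₁) / N := by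
          rw [hab, hℓ]; field_simp
      _ ≤ 1 / N := by gcongr; linarith
  have hsub (i : Fin R) : Icc (a + (i : ℝ) * ℓ) (a + ((i : ℝ) + 1) * ℓ) ⊆ Icc a b :=
    hba ▸ Icc_add_mul_subset_Icc hℓ₀.le i.isLt
  refine Fin.ncard_le_of_forall_le_add (k := 2) ?_
  rintro t ⟨x, hxt, -, p, q, hq, -, hqlo, hqhi, hx⟩ s ⟨y, hys, -, p', q', hq', -, hq'lo, hq'hi, hy⟩
  obtain ⟨hlow, hup⟩ := abs_sub_mem_Icc_of_abs_deriv_mem_Icc (fun z hz => (hf z (hJ hz)).mono hJ)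
    (fun z hz => hb z (hJ hz)) (hsub t hxt) (hsub s hys)
  have hfxy := abs_sub_le_of_near_rationals hq hq' hqhi hq'hi (hx.trans (hrad q hqlo))
    (hy.trans (hrad q' hq'lo))
    (hup.trans (mul_le_mul_of_nonneg_left (Real.dist_le_of_mem_Icc (hsub t hxt) (hsub s hys))
      (by linarith))) hgap
  exact le_add_two_of_abs_sub_le hℓ₀ hxt hys (le_of_mul_le_mul_left (by linarith) hc₀)

/-- Subdividing an interval `J ⊆ I` of length `c₁R^(−n)` into `R` closed subintervals
of equal length `c₁R^(−(n+1))`, at most `3` of them meet the union of the sets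
`Δ(p/q) = {x ∈ I : |f(x) − p/q| ≤ c/q²}` over rationals `p/q` (in lowest terms) with
`R^(n−1) ≤ q² < R^n`. -/
theorem at_most_three_removed_subintervals
    (I : Set ℝ) (hI : I.OrdConnected)
    (f f' : ℝ → ℝ) (hf : ∀ x ∈ I, HasDerivWithinAt f (f' x) I x)
    (c₀ C₀ : ℝ) (hc₀ : 0 < c₀)
    (hb : ∀ x ∈ I, c₀ ≤ |f' x| ∧ |f' x| ≤ C₀)
    (R : ℕ) (hR : 4 ≤ R) (n : ℕ) (hn : 1 ≤ n)
    (c c₁ : ℝ) (hc : 0 < c) (hc₁ : c₁ = 2 * c * (R : ℝ) ^ 2 / c₀)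
    (hsmall : 2 * C₀ * c₁ ≤ 1)
    (a b : ℝ) (hab : b - a = c₁ * (R : ℝ) ^ (-(n : ℝ)))
    (hJ : Set.Icc a b ⊆ I) :
    Set.ncard {t : Fin R |
      ∃ x ∈ Set.Icc (a + (t : ℝ) * (c₁ * (R : ℝ) ^ (-((n : ℝ) + 1))))
                    (a + ((t : ℝ) + 1) * (c₁ * (R : ℝ) ^ (-((n : ℝ) + 1)))),
        x ∈ I ∧ ∃ (p : ℤ) (q : ℕ), 0 < q ∧ Int.gcd p (q : ℤ) = 1 ∧
          (R : ℝ) ^ ((n : ℝ) - 1) ≤ (q : ℝ) ^ 2 ∧ (q : ℝ) ^ 2 < (R : ℝ) ^ (n : ℝ) ∧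
          |f x - (p : ℝ) / (q : ℝ)| ≤ c / (q : ℝ) ^ 2} ≤ 3 :=
  at_most_three_removed_subintervals_general I f f' hf c₀ C₀ hc₀ hb R hR n c c₁ hc hc₁ hsmall a b
    hab hJ
end
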